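/- arXiv:1908.01116 — 4 statements merged into one kernel-verified Lean document; each statement's English description precedes it below -/
import Mathlib

section
/- For n ≥ 2 and k ≥ 2, the de Bruijn graph B(n,k) contains a Hamiltonian cycle. -/
/-- Words of length `n` over a `k`-letter alphabet (letters are `Fin k`). -/
abbrev Word (n k : ℕ) := Fin n → Fin k

/-- De Bruijn adjacency: there is an edge `x₁x₂⋯xₙ → x₂⋯xₙx_{n+1}`,
i.e. `v` is obtained from `u` by shifting one position to the left. -/
def dbAdj {n k : ℕ} (u v : Word n k) : Prop :=
  ∀ (i : ℕ) (h : i + 1 < n), v ⟨i, by omega⟩ = u ⟨i + 1, h⟩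

/-!
The de Bruijn graph is a line digraph: two words with a common successor differ at most in their
first letter, so they have the same successors. In such a digraph, start from any permutation `σ`
sending every vertex to a successor (for de Bruijn words: cyclic rotation) and merge cycles. If `u`
and `u'` have a common successor but lie in different cycles of `σ`, then `σ * swap u u'` still
sends every vertex to a successor, and it joins the cycles of `u` and `u'`. Strong connectivity
provides such a pair as long as `σ` has more than one cycle; a single cycle through all vertices
is a Hamiltonian cycle.
-/

open Equiv.Perm

variable {α : Type*} {σ : Equiv.Perm α}

theorem Equiv.Perm.sameCycle_mul_swap_of_not_sameCycle [Finite α] [DecidableEq α] {x y z : α}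
    (hxy : ¬σ.SameCycle x y) (hxz : σ.SameCycle x z) : (σ * Equiv.swap x y).SameCycle y z := by
  -- from `y`, the new permutation steps to `σ x` and then runs through the old cycle of `x`
  have key : ∀ i : ℕ, (σ * Equiv.swap x y).SameCycle y ((σ ^ (i + 1)) x) := by
    intro i
    induction i with
    | zero => exact ⟨1, by simp⟩
    | succ i ih =>
      rw [pow_succ', mul_apply]
      by_cases hx : (σ ^ (i + 1)) x = x
      · rw [hx]
        exact ⟨1, by simp⟩
      · have hy : (σ ^ (i + 1)) x ≠ y := fun h =>
          hxy (h ▸ sameCycle_pow_right.2 (SameCycle.refl σ x))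
        have hstep : (σ * Equiv.swap x y) ((σ ^ (i + 1)) x) = σ ((σ ^ (i + 1)) x) := by
          rw [mul_apply, Equiv.swap_apply_of_ne_of_ne hx hy]
        exact hstep ▸ sameCycle_apply_right.2 ih
  obtain ⟨i, hi, -, rfl⟩ := hxz.exists_pow_eq''
  obtain ⟨i, rfl⟩ := Nat.exists_eq_add_of_lt hi
  simpa using key i

theorem Equiv.Perm.IsCycleOn.exists_bijective_fin [Fintype α] {N : ℕ}
    (hσ : σ.IsCycleOn .univ) (hN : Fintype.card α = N) :
    ∃ c : Fin N → α, Function.Bijective c ∧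
      ∀ i : Fin N, c ⟨(i + 1) % N, Nat.mod_lt _ i.pos⟩ = σ (c i) := by
  subst hN
  rcases isEmpty_or_nonempty α with hα | ⟨⟨x⟩⟩
  · rw [Fintype.card_eq_zero]
    exact ⟨_, (Equiv.equivOfIsEmpty (Fin 0) α).bijective, fun i => i.elim0⟩
  have hmod : ∀ {i j : ℕ}, (σ ^ i) x = (σ ^ j) x ↔ i ≡ j [MOD Fintype.card α] := by
    rw [← Finset.coe_univ] at hσ
    exact hσ.pow_apply_eq_pow_apply (Finset.mem_univ x)
  refine ⟨fun i => (σ ^ (i : ℕ)) x, (Fintype.bijective_iff_injective_and_card _).2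
    ⟨fun i j hij => Fin.ext ((hmod.1 hij).eq_of_lt_of_lt i.2 j.2), Fintype.card_fin _⟩,
    fun i => ?_⟩
  dsimp only
  rw [hmod.2 (Nat.mod_modEq _ _), pow_succ', mul_apply]

/-- Heuchenne's condition: `r` is the arc relation of a line digraph. -/
def IsLineDigraphRel (r : α → α → Prop) : Prop :=
  ∀ ⦃a b c d⦄, r a c → r b c → r a d → r b d

variable {r : α → α → Prop}

theorem IsLineDigraphRel.rel_mul_swap_apply [DecidableEq α] (hr : IsLineDigraphRel r)
    (hσ : ∀ a, r a (σ a)) {u u' w : α} (hu : r u w) (hu' : r u' w) (a : α) :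
    r a ((σ * Equiv.swap u u') a) := by
  rw [mul_apply, Equiv.swap_apply_def]
  split_ifs with h h'
  · exact h ▸ hr hu' hu (hσ u')
  · exact h' ▸ hr hu hu' (hσ u)
  · exact hσ a

theorem sameCycle_of_closed_under_common_successor (hσ : ∀ a, r a (σ a))
    (hconn : ∀ a b, Relation.ReflTransGen r a b) {x : α}
    (hclosed : ∀ u u' w, σ.SameCycle x u → r u w → r u' w → σ.SameCycle x u') (y : α) :
    σ.SameCycle x y := by
  induction hconn x y with
  | refl => rfl
  | @tail b c _ hbc ih =>
    simpa using (hclosed b (σ.symm c) c ih hbc (by simpa using hσ (σ.symm c))).apply_right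

theorem IsLineDigraphRel.exists_isCycleOn_univ [Fintype α] (hr : IsLineDigraphRel r)
    (hconn : ∀ a b, Relation.ReflTransGen r a b) (σ₀ : Equiv.Perm α)
    (hσ₀ : ∀ a, r a (σ₀ a)) :
    ∃ σ : Equiv.Perm α, (∀ a, r a (σ a)) ∧ σ.IsCycleOn .univ := by
  classical
  rcases isEmpty_or_nonempty α with hα | ⟨⟨x⟩⟩
  · exact ⟨σ₀, hσ₀, isCycleOn_of_subsingleton _ _⟩
  obtain ⟨σ, hσ, hmax⟩ := Finset.exists_max_image
    (Finset.univ.filter fun σ : Equiv.Perm α => ∀ a, r a (σ a))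
    (fun σ => (Finset.univ.filter (σ.SameCycle x)).card) ⟨σ₀, by simpa using hσ₀⟩
  simp only [Finset.mem_filter, Finset.mem_univ, true_and] at hσ hmax
  suffices hx : ∀ y, σ.SameCycle x y from
    ⟨σ, hσ, Set.bijOn_univ.2 σ.bijective, fun a _ b _ => (hx a).symm.trans (hx b)⟩
  refine sameCycle_of_closed_under_common_successor hσ hconn
    fun u u' w hu huw hu'w => by_contra fun hu' => ?_
  have huu' : ¬σ.SameCycle u u' := fun h => hu' (hu.trans h)
  set τ := σ * Equiv.swap u u'
  have hτu' : τ.SameCycle x u' := (sameCycle_mul_swap_of_not_sameCycle huu' hu.symm).symm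
  have hτ : ∀ z, σ.SameCycle x z → τ.SameCycle x z := fun z hz =>
    hτu'.trans (sameCycle_mul_swap_of_not_sameCycle huu' (hu.symm.trans hz))
  have hlt : (Finset.univ.filter (σ.SameCycle x)).card
      < (Finset.univ.filter (τ.SameCycle x)).card := by
    refine Finset.card_lt_card ((Finset.ssubset_iff_of_subset fun z => ?_).2 ⟨u', ?_, ?_⟩)
    · simpa using hτ z
    · simpa using hτu'
    · simpa using hu'
  exact (hmax τ (hr.rel_mul_swap_apply hσ huw hu'w)).not_gt hlt

theorem isLineDigraphRel_dbAdj {n k : ℕ} : IsLineDigraphRel (dbAdj (n := n) (k := k)) :=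
  fun _ _ _ _ hac hbc had i h => (had i h).trans ((hac i h).symm.trans (hbc i h))

theorem dbAdj_comp_finRotate {n k : ℕ} (u : Word n k) : dbAdj u (u ∘ finRotate n) := by
  intro i h
  obtain ⟨m, rfl⟩ : ∃ m, n = m + 1 := ⟨n - 1, by omega⟩
  exact congrArg u (finRotate_of_lt (by omega))

theorem dbAdj_reflTransGen {n k : ℕ} (u v : Word n k) : Relation.ReflTransGen dbAdj u v := by
  -- the length-`n` windows of the word `u ++ v` lead from `u` to `v`
  have hwindow : ∀ s (hs : s ≤ n),
      Relation.ReflTransGen dbAdj u (fun i => Fin.append u v ⟨s + i, by omega⟩) := by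
    intro s
    induction s with
    | zero =>
      intro _
      convert Relation.ReflTransGen.refl using 1
      ext i
      simp [Fin.append, Fin.addCases]
    | succ s ih =>
      intro hs
      refine (ih (by omega)).tail fun i h => ?_
      congr 1
      ext
      simp only
      omega
  convert hwindow n le_rfl using 1
  ext i
  simp [Fin.append, Fin.addCases]

theorem deBruijn_hamiltonian_general (n k : ℕ) :
    ∃ c : Fin (k ^ n) → Word n k, Function.Bijective c ∧
      ∀ i : Fin (k ^ n), dbAdj (c i) (c ⟨((i : ℕ) + 1) % k ^ n, Nat.mod_lt _ i.pos⟩) := by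
  obtain ⟨σ, hσ, hcycle⟩ := isLineDigraphRel_dbAdj.exists_isCycleOn_univ dbAdj_reflTransGen
    ((finRotate n).symm.arrowCongr (Equiv.refl _)) fun u => dbAdj_comp_finRotate u
  obtain ⟨c, hc, hsucc⟩ :=
    hcycle.exists_bijective_fin (by simp : Fintype.card (Word n k) = k ^ n)
  exact ⟨c, hc, fun i => hsucc i ▸ hσ (c i)⟩

/-- For `n ≥ 2` and `k ≥ 2`, the de Bruijn graph `B(n,k)` contains a
Hamiltonian cycle: a cyclic arrangement of all `k ^ n` words in which consecutive
words are joined by a de Bruijn edge. -/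
theorem deBruijn_hamiltonian (n k : ℕ) (hn : 2 ≤ n) (hk : 2 ≤ k) :
    ∃ c : Fin (k ^ n) → Word n k, Function.Bijective c ∧
      ∀ i : Fin (k ^ n), dbAdj (c i) (c ⟨((i : ℕ) + 1) % k ^ n, Nat.mod_lt _ i.pos⟩) :=
  deBruijn_hamiltonian_general n k
end

section
/- In the de Bruijn graph B(n,k) with k = 2, if a vertex a = y x^{n-1} is out-special and b = x^{n-1} y is in-special (x ≠ y), then no Hamiltonian cycle of B(n,2) contains the edge from a to b. -/
/-- in `B(n,2)`, if `a = y x^{n-1}` is out-special and `b = x^{n-1} y` is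
in-special with `x ≠ y`, then no Hamiltonian cycle of `B(n,2)` contains the edge `a → b`. -/
theorem deBruijn_no_hamiltonian_through_special_edge (n : ℕ) (hn : 2 ≤ n)
    (x y : Fin 2) (hxy : x ≠ y) (a b : Word n 2)
    (ha : a = fun (j : Fin n) => if (j : ℕ) = 0 then y else x)
    (hb : b = fun (j : Fin n) => if (j : ℕ) = n - 1 then y else x)
    (c : Fin (2 ^ n) → Word n 2) (hbij : Function.Bijective c)
    (hcyc : ∀ i : Fin (2 ^ n), dbAdj (c i) (c ⟨((i : ℕ) + 1) % 2 ^ n, Nat.mod_lt _ i.pos⟩)) :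
    ¬ ∃ i : Fin (2 ^ n), c i = a ∧ c ⟨((i : ℕ) + 1) % 2 ^ n, Nat.mod_lt _ i.pos⟩ = b := by
  rintro ⟨i, hca, hcb⟩
  have hN4 : 4 ≤ 2 ^ n := by
    calc 4 = 2 ^ 2 := by norm_num
    _ ≤ 2 ^ n := Nat.pow_le_pow_right (by norm_num) hn
  -- the all-x word x^n
  set w : Word n 2 := fun _ => x with hw
  obtain ⟨j, hj⟩ := hbij.2 w
  -- predecessor of j in the cycle
  have hjp : (j.val + (2 ^ n - 1)) % 2 ^ n < 2 ^ n := Nat.mod_lt _ (by omega)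
  set j' : Fin (2 ^ n) := ⟨(j.val + (2 ^ n - 1)) % 2 ^ n, hjp⟩ with hj'
  have hsucc : ((j' : ℕ) + 1) % 2 ^ n = j.val := by
    have h1 : ((j.val + (2 ^ n - 1)) % 2 ^ n + 1) % 2 ^ n
        = (j.val + (2 ^ n - 1) + 1) % 2 ^ n := Nat.mod_add_mod _ _ _
    have h2 : j.val + (2 ^ n - 1) + 1 = j.val + 2 ^ n := by omega
    have h3 : (j.val + 2 ^ n) % 2 ^ n = j.val % 2 ^ n := Nat.add_mod_right _ _
    simp only [hj', h1, h2, h3, Nat.mod_eq_of_lt j.isLt]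
  have hadj := hcyc j'
  have hceq : c ⟨((j' : ℕ) + 1) % 2 ^ n, Nat.mod_lt _ j'.pos⟩ = w := by
    rw [show (⟨((j' : ℕ) + 1) % 2 ^ n, Nat.mod_lt _ j'.pos⟩ : Fin (2 ^ n)) = j from
      Fin.ext hsucc]
    exact hj
  rw [hceq] at hadj
  -- c j' agrees with x on all positions ≥ 1
  have htail : ∀ (m : ℕ) (h : m + 1 < n), c j' ⟨m + 1, h⟩ = x := fun m h => (hadj m h).symm
  -- every element of Fin 2 is x or y
  have hz : ∀ z : Fin 2, z = x ∨ z = y := by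
    intro z
    have hx := x.isLt; have hy := y.isLt; have hzv := z.isLt
    have hne : (x : ℕ) ≠ (y : ℕ) := fun h => hxy (Fin.ext h)
    have : (z : ℕ) = x ∨ (z : ℕ) = y := by omega
    rcases this with h | h
    · exact Or.inl (Fin.ext h)
    · exact Or.inr (Fin.ext h)
  have hcases : c j' = w ∨ c j' = a := by
    rcases hz (c j' ⟨0, by omega⟩) with h | h
    · left; funext m
      show c j' m = x
      rcases Nat.eq_zero_or_pos m.val with hm | hm
      · rw [show m = ⟨0, by omega⟩ from Fin.ext hm]; exact h
      · have hmeq : m = ⟨(m.val - 1) + 1, by omega⟩ := Fin.ext (by simp; omega)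
        rw [hmeq]; exact htail _ _
    · right; funext m
      rw [ha]
      rcases Nat.eq_zero_or_pos m.val with hm | hm
      · simp only [hm, if_pos rfl]
        rw [show m = ⟨0, by omega⟩ from Fin.ext hm]; exact h
      · simp only [if_neg (by omega : ¬ (m : ℕ) = 0)]
        have hmeq : m = ⟨(m.val - 1) + 1, by omega⟩ := Fin.ext (by simp; omega)
        rw [hmeq]; exact htail _ _
  rcases hcases with hcase | hcase
  · -- c j' = x^n, so j' = j, impossible for a cycle of length ≥ 2
    have hj'j : j' = j := hbij.1 (hcase.trans hj.symm)
    rw [hj'j] at hsucc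
    rcases lt_or_ge (j.val + 1) (2 ^ n) with h | h
    · rw [Nat.mod_eq_of_lt h] at hsucc; omega
    · have hje : j.val + 1 = 2 ^ n := by have := j.isLt; omega
      rw [hje, Nat.mod_self] at hsucc
      have := j.isLt; omega
  · -- c j' = a, so j' = i, so b = x^n, contradiction
    have hj'i : j' = i := hbij.1 (hcase.trans hca.symm)
    have hidx : (⟨((i : ℕ) + 1) % 2 ^ n, Nat.mod_lt _ i.pos⟩ : Fin (2 ^ n)) = j :=
      Fin.ext (by rw [← hj'i]; exact hsucc)
    have hbw : b = w := by rw [← hcb, hidx, hj]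
    have hev := congrFun hbw ⟨n - 1, by omega⟩
    rw [hb] at hev
    simp only [if_pos rfl] at hev
    exact hxy hev.symm
end

section
/- For n ≥ 2 and k ≥ 2, if exactly one word w is removed from A^n, the resulting set A^n ∖ {w} admits a universal cycle if and only if w is a constant word x^n; hence P_c(n,k,1) = k/k^n = 1/k^{n−1}. -/
/-- `S` admits a universal cycle: a circular word of length `|S|` (necessarily of
length at least `n` so that it has genuine cyclic subwords of length `n`) in which
every word of `S` occurs exactly once as a cyclic contiguous subword of length `n`. -/
def HasUCycle {n k : ℕ} (S : Finset (Word n k)) : Prop :=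
  n ≤ S.card ∧ ∃ u : Fin S.card → Fin k, ∀ w ∈ S, ∃! i : Fin S.card,
    ∀ j : Fin n, w j = u ⟨((i : ℕ) + (j : ℕ)) % S.card, Nat.mod_lt _ i.pos⟩

/-!
Read along a universal cycle of `S`, consecutive windows overlap in `n - 1` letters, so the words
of `S`, viewed as edges of the de Bruijn graph from their prefix to their suffix of length
`n - 1`, form a closed walk: every vertex has as many outgoing as incoming edges in `S`. The full
set `A^n` is balanced in this sense (rotation maps prefixes to suffixes), so removing `w` keeps the
balance exactly when the prefix and suffix of `w` agree, that is, when `w` is constant.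

Conversely, without the loop `x^n` the graph stays balanced and strongly connected (every vertex
reaches and is reached from `y^(n-1)` for a letter `y ≠ x`), hence it has an Eulerian circuit, and
the first letters of its edges spell a universal cycle. The Eulerian circuit is a longest trail:
balance forces a longest trail to be closed, and connectivity would let a missing edge lengthen it.
-/

open Finset Relation
section Euler

-- A directed multigraph: the edge `e` runs from `s e` to `t e`. It is balanced (in-degree equals
-- out-degree everywhere) when `univ.val.map s = univ.val.map t`.
variable {V E : Type*} (s t : E → V)

def IsTrail (L : List E) : Prop :=
  L.Nodup ∧ L.IsChain (fun a b => t a = s b)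

variable {s t}

theorem List.IsChain.map_append_getLast_eq_cons_map :
    ∀ {L : List E}, L.IsChain (fun a b => t a = s b) → ∀ h : L ≠ [],
      L.map s ++ [t (L.getLast h)] = s (L.head h) :: L.map t
  | [_], _, _ => rfl
  | e :: f :: L, hL, _ => by
    rw [List.isChain_cons_cons] at hL
    have ih := hL.2.map_append_getLast_eq_cons_map (List.cons_ne_nil f L)
    simp only [List.map_cons, List.getLast_cons_cons, List.cons_append, List.head_cons] at ih ⊢
    rw [ih, hL.1]

theorem IsTrail.append_singleton {L : List E} {e : E} (hL : IsTrail s t L) (he : e ∉ L)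
    (hlast : ∀ a ∈ L.getLast?, t a = s e) : IsTrail s t (L ++ [e]) :=
  ⟨hL.1.append (List.nodup_singleton e) (by simpa using he),
    hL.2.append (List.isChain_singleton e) (by simpa using hlast)⟩

theorem exists_longest_trail [Fintype E] :
    ∃ L, IsTrail s t L ∧ ∀ L', IsTrail s t L' → L'.length ≤ L.length := by
  have hfin : {L : List E | IsTrail s t L}.Finite :=
    (List.finite_length_le E (Fintype.card E)).subset fun L hL => hL.1.length_le_card
  exact Set.exists_max_image _ List.length hfin ⟨[], List.nodup_nil, .nil⟩

theorem IsTrail.exists_extension_of_not_closed [Fintype E]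
    (hbal : univ.val.map s = univ.val.map t) {L : List E} (hL : IsTrail s t L) (h : L ≠ [])
    (hopen : t (L.getLast h) ≠ s (L.head h)) :
    ∃ e ∉ L, s e = t (L.getLast h) := by
  classical
  set R : Multiset E := univ.val - (L : Multiset E)
  have hsplit (f : E → V) : univ.val.map f = (L.map f : Multiset V) + R.map f := by
    rw [← Multiset.map_coe, ← Multiset.map_add, add_tsub_cancel_of_le]
    exact (Multiset.le_iff_subset (Multiset.coe_nodup.2 hL.1)).2 fun e _ => mem_univ_val e
  -- `L` enters its endpoint once more than it leaves it, while the whole graph is balanced.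
  have hcount : (L.map s).count (t (L.getLast h)) + 1 = (L.map t).count (t (L.getLast h)) := by
    have := congrArg (List.count (t (L.getLast h))) (hL.2.map_append_getLast_eq_cons_map h)
    simpa [List.count_cons, Ne.symm hopen] using this
  have hR : 0 < (R.map s).count (t (L.getLast h)) := by
    have := congrArg (Multiset.count (t (L.getLast h))) hbal
    rw [hsplit, hsplit, Multiset.count_add, Multiset.count_add] at this
    simp only [Multiset.coe_count] at this
    omega
  obtain ⟨e, heR, hev⟩ := Multiset.mem_map.1 (Multiset.count_pos.1 hR)
  exact ⟨e, fun heL => ((Multiset.mem_sub_of_nodup univ.nodup).1 heR).2 heL, hev⟩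

theorem IsTrail.cycleChain_of_longest [Fintype E] (hbal : univ.val.map s = univ.val.map t)
    {L : List E} (hL : IsTrail s t L) (hmax : ∀ L', IsTrail s t L' → L'.length ≤ L.length) :
    Cycle.Chain (fun a b => t a = s b) (L : Cycle E) := by
  rcases eq_or_ne L [] with rfl | h
  · exact Cycle.Chain.nil _
  have hclosed : t (L.getLast h) = s (L.head h) := by
    by_contra hopen
    obtain ⟨e, he, hse⟩ := hL.exists_extension_of_not_closed hbal h hopen
    have := hmax _ (hL.append_singleton he (by simp [List.getLast?_eq_some_getLast h, hse]))
    simp at this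
  rw [Cycle.chain_ne_nil _ h, List.isChain_cons]
  exact ⟨by simp [List.head?_eq_some_head h, hclosed], hL.2⟩

theorem Cycle.Chain.exists_perm_isChain_cons {α : Type*} {R : α → α → Prop} {L : List α}
    (hL : Cycle.Chain R (L : Cycle α)) {g : α} (hg : g ∈ L) :
    ∃ l, (g :: l).Perm L ∧ (g :: (l ++ [g])).IsChain R := by
  obtain ⟨A, B, rfl⟩ := List.append_of_mem hg
  refine ⟨B ++ A, List.perm_append_comm (l₁ := g :: B), ?_⟩
  rw [← Cycle.chain_coe_cons, ← List.cons_append,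
    Cycle.coe_eq_coe.2 (List.isRotated_append (l := g :: B) (l' := A))]
  exact hL

theorem Cycle.Chain.exists_next {L : List E}
    (hC : Cycle.Chain (fun a b => t a = s b) (L : Cycle E)) {g : E} (hg : g ∈ L) :
    ∃ g' ∈ L, t g = s g' := by
  obtain ⟨l, hperm, hchain⟩ := hC.exists_perm_isChain_cons hg
  have hne : l ++ [g] ≠ [] := by simp
  exact ⟨(l ++ [g]).head hne,
    hperm.subset ((List.perm_append_singleton g l).subset (List.head_mem hne)),
    hchain.rel_head? (List.head?_eq_some_head hne)⟩

theorem exists_unused_edge_from_circuit {L : List E}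
    (hC : Cycle.Chain (fun a b => t a = s b) (L : Cycle E))
    (hconn : ∀ e f : E, ReflTransGen (fun a b => ∃ g, s g = a ∧ t g = b) (t e) (s f))
    {g₀ f : E} (hg₀ : g₀ ∈ L) (hf : f ∉ L) : ∃ e ∉ L, ∃ g ∈ L, s e = s g := by
  have key : ∀ c, ReflTransGen (fun a b => ∃ g, s g = a ∧ t g = b) (t g₀) c →
      (∃ g ∈ L, s g = c) ∨ ∃ e ∉ L, ∃ g ∈ L, s e = s g := by
    intro c hc
    induction hc with
    | refl =>
      obtain ⟨g', hg', h⟩ := hC.exists_next hg₀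
      exact .inl ⟨g', hg', h.symm⟩
    | tail _ hbc ih =>
      obtain ⟨ed, rfl, rfl⟩ := hbc
      rcases ih with ⟨g, hg, hsg⟩ | hesc
      · by_cases hed : ed ∈ L
        · obtain ⟨g', hg', h⟩ := hC.exists_next hed
          exact .inl ⟨g', hg', h.symm⟩
        · exact .inr ⟨ed, hed, g, hg, hsg.symm⟩
      · exact .inr hesc
  rcases key _ (hconn g₀ f) with ⟨g, hg, hsg⟩ | hesc
  · exact ⟨f, hf, g, hg, hsg.symm⟩
  · exact hesc

theorem exists_eulerian_circuit [Fintype E] (hbal : univ.val.map s = univ.val.map t)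
    (hconn : ∀ e f : E, ReflTransGen (fun a b => ∃ g, s g = a ∧ t g = b) (t e) (s f)) :
    ∃ L : List E, L.Nodup ∧ (∀ e, e ∈ L) ∧
      Cycle.Chain (fun a b => t a = s b) (L : Cycle E) := by
  obtain ⟨L, hL, hmax⟩ := exists_longest_trail (s := s) (t := t)
  have hC := hL.cycleChain_of_longest hbal hmax
  refine ⟨L, hL.1, fun f => ?_, hC⟩
  by_contra hf
  obtain ⟨g₀, hg₀⟩ : ∃ g, g ∈ L :=
    List.exists_mem_of_length_pos (hmax [f] ⟨List.nodup_singleton f, List.isChain_singleton f⟩)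
  obtain ⟨e, he, g, hg, hse⟩ := exists_unused_edge_from_circuit hC hconn hg₀ hf
  obtain ⟨l, hperm, hchain⟩ := hC.exists_perm_isChain_cons hg
  have hlonger : IsTrail s t (g :: l ++ [e]) := by
    refine ⟨(hperm.append_right [e]).nodup_iff.2
      (hL.1.append (List.nodup_singleton e) (by simpa using he)), ?_⟩
    rw [← List.cons_append] at hchain
    rw [List.isChain_append] at hchain ⊢
    simpa [hse] using hchain
  have := hmax _ hlonger
  simp [← hperm.length_eq] at this

end Euler

section DeBruijn

variable {n m k : ℕ}

def window {N : ℕ} (u : Fin N → Fin k) (i : Fin N) : Word n k :=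
  fun j => u ⟨(i + j) % N, Nat.mod_lt _ i.pos⟩

theorem hasUCycle_iff {S : Finset (Word n k)} :
    HasUCycle S ↔
      n ≤ S.card ∧ ∃ u : Fin S.card → Fin k, univ.val.map (window u) = S.val := by
  classical
  refine and_congr_right fun _ => exists_congr fun u => ?_
  constructor
  · intro hu
    have hsub : S ⊆ univ.image (window u) := fun w hw => by
      obtain ⟨i, hi, -⟩ := hu w hw
      exact mem_image.2 ⟨i, mem_univ _, (funext hi).symm⟩
    have himage : univ.image (window u) = S :=
      (eq_of_subset_of_card_le hsub (card_image_le.trans (by simp))).symm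
    rw [← image_val_of_injOn (card_image_iff.1 (by simp [himage])), himage]
  · intro hu w hw
    rw [← Finset.mem_val, ← hu, Multiset.mem_map] at hw
    obtain ⟨i, -, rfl⟩ := hw
    have hinj := Multiset.inj_on_of_nodup_map (hu ▸ S.nodup)
    exact ⟨i, fun j => rfl,
      fun i' hi' => hinj _ (mem_univ_val _) _ (mem_univ_val _) (funext hi').symm⟩

theorem init_window_finRotate {N : ℕ} (u : Fin N → Fin k) (i : Fin N) :
    Fin.init (window u (finRotate N i) : Word (m + 1) k) = Fin.tail (window u i) := by
  funext j
  have : NeZero N := i.neZero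
  simp only [Fin.init, Fin.tail, window, finRotate_apply]
  congr 1
  ext
  simp only [Fin.val_add, Fin.val_one', Fin.val_castSucc, Fin.val_succ, Nat.mod_add_mod,
    Nat.add_mod_mod]
  ring_nf

theorem HasUCycle.map_init_eq_map_tail {S : Finset (Word (m + 1) k)} (h : HasUCycle S) :
    S.val.map Fin.init = S.val.map Fin.tail := by
  obtain ⟨-, u, hu⟩ := hasUCycle_iff.1 h
  calc S.val.map Fin.init = univ.val.map (Fin.init ∘ window u) := by rw [← hu, Multiset.map_map]
    _ = (univ.val.map (finRotate _)).map (Fin.init ∘ window u) := by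
      rw [Multiset.map_univ_val_equiv]
    _ = univ.val.map (Fin.tail ∘ window u) := by
      rw [Multiset.map_map]
      exact congrArg (Multiset.map · _) (funext (init_window_finRotate u))
    _ = S.val.map Fin.tail := by rw [← hu, Multiset.map_map]

theorem map_init_univ_eq_map_tail_univ :
    (univ : Finset (Word (m + 1) k)).val.map Fin.init =
      (univ : Finset (Word (m + 1) k)).val.map Fin.tail := by
  conv_lhs => rw [← Multiset.map_univ_val_equiv
    ((finRotate (m + 1)).symm.arrowCongr (Equiv.refl (Fin k))), Multiset.map_map]
  congr 1
  funext w j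
  simp [Fin.init, Fin.tail, Fin.coeSucc_eq_succ]

theorem map_init_erase_eq_map_tail_erase_iff (w : Word (m + 1) k) :
    (univ.erase w).val.map Fin.init = (univ.erase w).val.map Fin.tail ↔
      Fin.init w = Fin.tail w := by
  have h := map_init_univ_eq_map_tail_univ (m := m) (k := k)
  rw [← Multiset.cons_erase (mem_univ_val w), Multiset.map_cons, Multiset.map_cons] at h
  rw [erase_val]
  constructor
  · intro hrest
    rwa [hrest, Multiset.cons_inj_left] at h
  · intro hw
    rwa [hw, Multiset.cons_inj_right] at h

theorem init_eq_tail_iff (w : Word (m + 1) k) :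
    Fin.init w = Fin.tail w ↔ ∃ x, w = fun _ => x := by
  refine ⟨fun h => ⟨w 0, funext fun i => ?_⟩, fun ⟨x, hx⟩ => hx ▸ rfl⟩
  induction i using Fin.induction with
  | zero => rfl
  | succ i ih => exact (congrFun h i).symm.trans ih

theorem Cycle.Chain.rel_getElem_mod {α : Type*} {R : α → α → Prop} {l : List α}
    (h : Cycle.Chain R (l : Cycle α)) (hl : 0 < l.length) (p : ℕ) :
    R (l[p % l.length]'(Nat.mod_lt _ hl)) (l[(p + 1) % l.length]'(Nat.mod_lt _ hl)) := by
  obtain ⟨hwrap, hchain⟩ :=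
    List.isChain_cons.1 ((Cycle.chain_ne_nil R (List.ne_nil_of_length_pos hl)).1 h)
  simp only [← Nat.mod_add_mod p l.length 1]
  suffices H : ∀ i (hi : i < l.length), R l[i] (l[(i + 1) % l.length]'(Nat.mod_lt _ hl)) from
    H _ (Nat.mod_lt _ hl)
  intro i hi
  rcases Nat.lt_or_ge (i + 1) l.length with hlt | hge
  · simp only [Nat.mod_eq_of_lt hlt]
    exact hchain.getElem i hlt
  · obtain rfl : i = l.length - 1 := by omega
    simp only [Nat.sub_add_cancel hl, Nat.mod_self]
    simpa [List.getLast_eq_getElem] using hwrap l[0] (by simp [List.head?_eq_getElem?])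

theorem hasUCycle_of_cycleChain {S : Finset (Word (m + 1) k)} (hcard : m + 1 ≤ S.card)
    (W : List (Word (m + 1) k)) (hW : (W : Multiset (Word (m + 1) k)) = S.val)
    (hchain : Cycle.Chain (fun a b => Fin.tail a = Fin.init b) (W : Cycle (Word (m + 1) k))) :
    HasUCycle S := by
  have hlen : W.length = S.card := by rw [← Multiset.coe_card, hW, card_val]
  have hpos : 0 < W.length := by omega
  let c (p : ℕ) : Word (m + 1) k := W[p % W.length]'(Nat.mod_lt _ hpos)
  have hc (p : ℕ) : Fin.tail (c p) = Fin.init (c (p + 1)) := hchain.rel_getElem_mod hpos p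
  have hwin (j : ℕ) (hj : j < m + 1) (p : ℕ) : c p ⟨j, hj⟩ = c (p + j) 0 := by
    induction j generalizing p with
    | zero => rfl
    | succ j ih =>
      calc c p ⟨j + 1, hj⟩ = Fin.init (c (p + 1)) ⟨j, by omega⟩ :=
            congrFun (hc p) ⟨j, by omega⟩
        _ = c (p + 1 + j) 0 := ih (by omega) (p + 1)
        _ = c (p + (j + 1)) 0 := by rw [Nat.add_right_comm, Nat.add_assoc]
  refine hasUCycle_iff.2 ⟨hcard, fun i => c i 0, ?_⟩
  have hwindow : window (fun i : Fin S.card => c i 0) = fun i : Fin S.card => c i := by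
    funext i j
    have hperiodic : c ((i + j) % W.length) = c (i + j) := by simp only [c, Nat.mod_mod]
    simp only [window, ← hlen, hperiodic, ← hwin j j.2]
  rw [hwindow, Fin.univ_val_map, ← hW, Multiset.coe_eq_coe]
  refine .of_eq (List.ext_getElem (by simp [hlen]) fun i h₁ h₂ => ?_)
  simp [c, Nat.mod_eq_of_lt h₂]

def deBruijnAdj (S : Finset (Word (m + 1) k)) (a b : Word m k) : Prop :=
  ∃ g ∈ S, Fin.init g = a ∧ Fin.tail g = b

theorem reflTransGen_deBruijnAdj_of_windows {S : Finset (Word (m + 1) k)} (z : ℕ → Fin k)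
    (l : ℕ) (hz : ∀ i < l, (fun j : Fin (m + 1) => z (i + j)) ∈ S) :
    ReflTransGen (deBruijnAdj S) (fun j : Fin m => z j)
      (fun j : Fin m => z (l + j)) := by
  induction l with
  | zero => simpa using .refl
  | succ l ih =>
    refine (ih fun i hi => hz i (by omega)).tail ⟨_, hz l (by omega), rfl, ?_⟩
    funext j
    simp only [Fin.tail, Fin.val_succ]
    congr 1
    omega

theorem reflTransGen_deBruijnAdj_erase_const {x y : Fin k} (hxy : y ≠ x) (a b : Word m k) :
    ReflTransGen (deBruijnAdj (univ.erase fun _ => x)) a b := by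
  have hwin (z : ℕ → Fin k) (i : ℕ) (j : Fin (m + 1)) (hj : z (i + j) = y) :
      (fun j : Fin (m + 1) => z (i + j)) ∈ univ.erase (fun _ => x) := by
    simp only [mem_erase, mem_univ, and_true]
    exact fun h => hxy (hj.symm.trans (congrFun h j))
  -- `z₁ = a y y ⋯` and `z₂ = yᵐ b y ⋯`; each window used below contains a `y`.
  let z₁ (p : ℕ) : Fin k := if h : p < m then a ⟨p, h⟩ else y
  let z₂ (p : ℕ) : Fin k := if p < m then y else if h : p - m < m then b ⟨p - m, h⟩ else y
  have h₁ := reflTransGen_deBruijnAdj_of_windows z₁ m fun i _ =>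
    hwin z₁ i (Fin.last m) (by simp [z₁])
  have h₂ := reflTransGen_deBruijnAdj_of_windows z₂ m fun i hi =>
    hwin z₂ i 0 (by simp [z₂, hi])
  have ha : (fun j : Fin m => z₁ j) = a := funext fun j => by simp [z₁]
  have hy : (fun j : Fin m => z₁ (m + j)) = fun j : Fin m => z₂ j :=
    funext fun j => by simp [z₁, z₂]
  have hb : (fun j : Fin m => z₂ (m + j)) = b := funext fun j => by simp [z₂]
  rw [ha, hy] at h₁
  rw [hb] at h₂
  exact h₁.trans h₂

theorem hasUCycle_of_balanced {S : Finset (Word (m + 1) k)} (hcard : m + 1 ≤ S.card)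
    (hbal : S.val.map Fin.init = S.val.map Fin.tail)
    (hconn : ∀ a b, ReflTransGen (deBruijnAdj S) a b) : HasUCycle S := by
  have hS {β : Type} (f : Word (m + 1) k → β) :
      (univ : Finset S).val.map (fun g => f g.1) = S.val.map f := by
    rw [univ_eq_attach, attach_val]
    exact Multiset.attach_map_val' _ _
  obtain ⟨L, hnd, hall, hchain⟩ := exists_eulerian_circuit (s := fun g : S => Fin.init g.1)
    (t := fun g => Fin.tail g.1) (by rw [hS, hS, hbal])
    fun _ _ =>
      ReflTransGen.mono (fun _ _ ⟨g, hg, h⟩ => ⟨⟨g, hg⟩, h⟩) _ _ (hconn _ _)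
  have hL : (L : Multiset S) = univ.val :=
    (Multiset.Nodup.ext (Multiset.coe_nodup.2 hnd) univ.nodup).2 fun e => by
      simp only [Multiset.mem_coe, hall e, mem_univ_val]
  refine hasUCycle_of_cycleChain hcard (L.map Subtype.val) ?_ ?_
  · rw [← Multiset.map_coe, hL]
    simpa using hS id
  · rw [← Cycle.map_coe, Cycle.chain_map]
    exact hchain

theorem hasUCycle_univ_sdiff_singleton_iff (hk : 2 ≤ k) (w : Word (m + 1) k) :
    HasUCycle (univ \ {w}) ↔ ∃ x, w = fun _ => x := by
  rw [sdiff_singleton_eq_erase, ← init_eq_tail_iff]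
  refine ⟨fun h => (map_init_erase_eq_map_tail_erase_iff w).1 h.map_init_eq_map_tail,
    fun h => ?_⟩
  obtain ⟨x, rfl⟩ := (init_eq_tail_iff _).1 h
  have : Nontrivial (Fin k) := Fin.nontrivial_iff_two_le.2 hk
  obtain ⟨y, hyx⟩ := exists_ne x
  refine hasUCycle_of_balanced ?_ ((map_init_erase_eq_map_tail_erase_iff _).2 h)
    (reflTransGen_deBruijnAdj_erase_const hyx)
  have h₁ : m + 1 < 2 ^ (m + 1) := Nat.lt_two_pow_self
  have h₂ : 2 ^ (m + 1) ≤ k ^ (m + 1) := Nat.pow_le_pow_left hk _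
  rw [card_erase_of_mem (mem_univ _), card_univ, Fintype.card_fun, Fintype.card_fin,
    Fintype.card_fin]
  omega

theorem card_const_words : Nat.card {w : Word (m + 1) k // ∃ x, w = fun _ => x} = k :=
  Nat.card_eq_of_equiv_fin
    { toFun := fun w => w.1 0
      invFun := fun x => ⟨fun _ => x, x, rfl⟩
      left_inv := by rintro ⟨_, x, rfl⟩; rfl
      right_inv := fun _ => rfl }

end DeBruijn

/-- for `n, k ≥ 2`, removing a single word `w` from `A^n` leaves a set
admitting a universal cycle if and only if `w` is a constant word `x^n`; hence the
probability that a uniformly random single removal leaves a u-cycle is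
`k / k^n = 1 / k^(n-1)`. -/
theorem ucycle_remove_one_iff_constant (n k : ℕ) (hn : 2 ≤ n) (hk : 2 ≤ k) :
    (∀ w : Word n k,
      HasUCycle ((Finset.univ : Finset (Word n k)) \ {w}) ↔ ∃ x : Fin k, w = fun _ => x) ∧
    (Nat.card {w : Word n k // HasUCycle ((Finset.univ : Finset (Word n k)) \ {w})} : ℚ)
        / (k ^ n) = 1 / (k : ℚ) ^ (n - 1) := by
  obtain ⟨m, rfl⟩ : ∃ m, n = m + 1 := ⟨n - 1, by omega⟩
  have hiff := hasUCycle_univ_sdiff_singleton_iff (m := m) hk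
  refine ⟨hiff, ?_⟩
  rw [Nat.card_congr (Equiv.subtypeEquivRight hiff), card_const_words, Nat.add_sub_cancel,
    pow_succ]
  have : (k : ℚ) ≠ 0 := by positivity
  field_simp
end

section
/- Let n ≥ 3 and k ≥ 2, and remove two distinct non-constant words a and b from A^n. If the corresponding vertices of B(n,k) are not joined by an edge in either direction (a ↛ b and b ↛ a in B(n,k)), then A^n ∖ {a,b} admits no universal word. -/
/-- `S` admits a universal word: a (non-circular) word of length `|S| + n - 1`
in which every word of `S` occurs exactly once as a contiguous subword of length `n`. -/
def HasUWord {n k : ℕ} (S : Finset (Word n k)) : Prop :=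
  ∃ u : Fin (S.card + n - 1) → Fin k, ∀ w ∈ S, ∃! i : Fin S.card,
    ∀ j : Fin n, w j = u ⟨(i : ℕ) + (j : ℕ), by have := i.isLt; have := j.isLt; omega⟩

/-- Totalization of a word `u : Fin L → Fin k` to all of `ℕ` (junk value `0` out of range). -/
def Uf {L k : ℕ} (hk : 0 < k) (u : Fin L → Fin k) (t : ℕ) : Fin k :=
  if h : t < L then u ⟨t, h⟩ else ⟨0, hk⟩

/-- The window of length `n` starting at position `t`. -/
def Wf {L k : ℕ} (hk : 0 < k) (u : Fin L → Fin k) (n t : ℕ) : Word n k :=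
  fun j => Uf hk u (t + j)

set_option maxHeartbeats 1000000 in
/-- for `n ≥ 3`, if two distinct non-constant words `a, b` are removed from
`A^n` and the corresponding vertices of `B(n,k)` are joined by no edge in either
direction, then the remaining set admits no universal word. -/
theorem no_uword_remove_two_nonadjacent (n k : ℕ) (hn : 3 ≤ n) (hk : 2 ≤ k)
    (a b : Word n k) (hne : a ≠ b)
    (ha : ¬ ∃ x : Fin k, a = fun _ => x) (hb : ¬ ∃ x : Fin k, b = fun _ => x)
    (h1 : ¬ dbAdj a b) (h2 : ¬ dbAdj b a) :
    ¬ HasUWord ((Finset.univ : Finset (Word n k)) \ {a, b}) := by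
  classical
  intro hH
  rw [HasUWord] at hH
  obtain ⟨m, rfl⟩ : ∃ m, n = m + 1 := ⟨n - 1, by omega⟩
  have hm : 2 ≤ m := by omega
  have hk0 : 0 < k := by omega
  set S : Finset (Word (m + 1) k) := Finset.univ \ {a, b} with hS
  obtain ⟨u, hu⟩ := hH
  -- `W t` : the length-(m+1) window at position t; `Vf t` : the length-m window at position t
  set W : ℕ → Word (m + 1) k := Wf hk0 u (m + 1) with hW
  set Vf : ℕ → Word m k := Wf hk0 u m with hVf
  have hU : ∀ (t : ℕ) (h : t < S.card + (m + 1) - 1), Uf hk0 u t = u ⟨t, h⟩ :=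
    fun t h => dif_pos h
  -- each word of S occurs as a unique window among positions 0..S.card-1
  have key : ∀ w ∈ S, ∃! t : Fin S.card, w = W (t : ℕ) := by
    intro w hw
    obtain ⟨i, hi, huniq⟩ := hu w hw
    have conv : ∀ t : Fin S.card, (w = W (t : ℕ)) ↔
        ∀ j : Fin (m + 1), w j = u ⟨(t : ℕ) + (j : ℕ), by
          have := t.isLt; have := j.isLt; omega⟩ := by
      intro t
      constructor
      · intro h j
        rw [h]
        exact hU _ (by have := t.isLt; have := j.isLt; omega)
      · intro h
        funext j
        rw [h j]
        exact (hU _ (by have := t.isLt; have := j.isLt; omega)).symm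
    exact ⟨i, (conv i).mpr hi, fun t ht => huniq t ((conv t).mp ht)⟩
  -- all windows are in S
  have wmem : ∀ t : Fin S.card, W (t : ℕ) ∈ S := by
    let e : {x // x ∈ S} → Fin S.card := fun w => (key w.1 w.2).choose
    have he : ∀ w : {x // x ∈ S}, w.1 = W ((e w : Fin S.card) : ℕ) :=
      fun w => (key w.1 w.2).choose_spec.1
    have hinj : Function.Injective e := by
      intro w w' h
      apply Subtype.ext
      rw [he w, he w', h]
    have hsurj : Function.Surjective e := by
      have hcards : Fintype.card {x // x ∈ S} = Fintype.card (Fin S.card) := by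
        simp [Fintype.card_coe]
      exact ((Fintype.bijective_iff_injective_and_card e).mpr ⟨hinj, hcards⟩).2
    intro t
    obtain ⟨w, rfl⟩ := hsurj t
    rw [← he w]; exact w.2
  -- windows at distinct positions are distinct
  have winj : ∀ t t' : Fin S.card, W (t : ℕ) = W (t' : ℕ) → t = t' := by
    intro t t' h
    obtain ⟨i, hi, hun⟩ := key _ (wmem t)
    exact (hun t rfl).trans (hun t' h).symm
  -- windows relationships: prefix/suffix of the (m+1)-window are m-windows
  have hpre : ∀ t : ℕ, (W t) ∘ Fin.castSucc = Vf t := by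
    intro t
    funext j
    simp only [hW, hVf, Wf, Function.comp_apply, Fin.coe_castSucc]
  have hsuc : ∀ t : ℕ, (W t) ∘ Fin.succ = Vf (t + 1) := by
    intro t
    funext j
    simp only [hW, hVf, Wf, Function.comp_apply, Fin.val_succ]
    congr 1
    omega
  -- counting windows with prefix v = counting elements of S with prefix v
  have countPre : ∀ v : Word m k,
      ((Finset.range S.card).filter fun t => Vf t = v).card
        = (S.filter fun w => w ∘ Fin.castSucc = v).card := by
    intro v
    apply Finset.card_bij (fun t _ => W t)
    · intro t ht
      simp only [Finset.mem_filter, Finset.mem_range] at ht ⊢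
      exact ⟨wmem ⟨t, ht.1⟩, by rw [hpre t]; exact ht.2⟩
    · intro t ht t' ht' h
      simp only [Finset.mem_filter, Finset.mem_range] at ht ht'
      have := winj ⟨t, ht.1⟩ ⟨t', ht'.1⟩ h
      simpa using congrArg Fin.val this
    · intro w hw
      simp only [Finset.mem_filter] at hw
      obtain ⟨i, hi, -⟩ := key w hw.1
      refine ⟨(i : ℕ), ?_, hi.symm⟩
      simp only [Finset.mem_filter, Finset.mem_range]
      refine ⟨i.isLt, ?_⟩
      rw [← hpre (i : ℕ), ← hi]
      exact hw.2
  -- counting windows with suffix v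
  have countSuf : ∀ v : Word m k,
      ((Finset.range S.card).filter fun t => Vf (t + 1) = v).card
        = (S.filter fun w => w ∘ Fin.succ = v).card := by
    intro v
    apply Finset.card_bij (fun t _ => W t)
    · intro t ht
      simp only [Finset.mem_filter, Finset.mem_range] at ht ⊢
      exact ⟨wmem ⟨t, ht.1⟩, by rw [hsuc t]; exact ht.2⟩
    · intro t ht t' ht' h
      simp only [Finset.mem_filter, Finset.mem_range] at ht ht'
      have := winj ⟨t, ht.1⟩ ⟨t', ht'.1⟩ h
      simpa using congrArg Fin.val this
    · intro w hw
      simp only [Finset.mem_filter] at hw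
      obtain ⟨i, hi, -⟩ := key w hw.1
      refine ⟨(i : ℕ), ?_, hi.symm⟩
      simp only [Finset.mem_filter, Finset.mem_range]
      refine ⟨i.isLt, ?_⟩
      rw [← hsuc (i : ℕ), ← hi]
      exact hw.2
  -- number of words with a given prefix is k
  have cardPre : ∀ v : Word m k,
      (Finset.univ.filter fun w : Word (m + 1) k => w ∘ Fin.castSucc = v).card = k := by
    intro v
    have hcb : (Finset.univ.filter fun w : Word (m + 1) k => w ∘ Fin.castSucc = v).card
        = (Finset.univ : Finset (Fin k)).card := by
      apply Finset.card_bij (fun w _ => w (Fin.last m))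
      · intros; exact Finset.mem_univ _
      · intro w hw w' hw' h
        simp only [Finset.mem_filter] at hw hw'
        funext i
        induction i using Fin.lastCases with
        | last => exact h
        | cast j => exact (congrFun hw.2 j).trans (congrFun hw'.2 j).symm
      · intro x _
        refine ⟨Fin.snoc v x, ?_, Fin.snoc_last _ _⟩
        simp only [Finset.mem_filter, Finset.mem_univ, true_and]
        funext j
        exact Fin.snoc_castSucc _ _ _
    rw [hcb]; simp
  -- number of words with a given suffix is k
  have cardSuf : ∀ v : Word m k,
      (Finset.univ.filter fun w : Word (m + 1) k => w ∘ Fin.succ = v).card = k := by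
    intro v
    have hcb : (Finset.univ.filter fun w : Word (m + 1) k => w ∘ Fin.succ = v).card
        = (Finset.univ : Finset (Fin k)).card := by
      apply Finset.card_bij (fun w _ => w 0)
      · intros; exact Finset.mem_univ _
      · intro w hw w' hw' h
        simp only [Finset.mem_filter] at hw hw'
        funext i
        induction i using Fin.cases with
        | zero => exact h
        | succ j => exact (congrFun hw.2 j).trans (congrFun hw'.2 j).symm
      · intro x _
        refine ⟨Fin.cons x v, ?_, Fin.cons_zero _ _⟩
        simp only [Finset.mem_filter, Finset.mem_univ, true_and]
        funext j
        exact Fin.cons_succ _ _ _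
    rw [hcb]; simp
  -- splitting a count over univ into S and {a,b}
  have splitS : ∀ (p : Word (m + 1) k → Prop) [DecidablePred p],
      (S.filter p).card + (({a, b} : Finset (Word (m + 1) k)).filter p).card
        = (Finset.univ.filter p).card := by
    intro p _
    rw [← Finset.card_union_of_disjoint
      (Finset.disjoint_filter_filter (by rw [hS]; exact Finset.sdiff_disjoint)),
      ← Finset.filter_union]
    congr 1
    rw [hS, Finset.sdiff_union_of_subset (Finset.subset_univ _)]
  -- the main balance equation, for each length-m word v
  have main : ∀ v : Word m k,
      (({a, b} : Finset (Word (m + 1) k)).filter fun w => w ∘ Fin.succ = v).card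
          + (if Vf S.card = v then 1 else 0)
        = (({a, b} : Finset (Word (m + 1) k)).filter fun w => w ∘ Fin.castSucc = v).card
          + (if Vf 0 = v then 1 else 0) := by
    intro v
    have e1 : ((Finset.range S.card).filter fun t => Vf t = v).card
        + (({a, b} : Finset (Word (m + 1) k)).filter fun w => w ∘ Fin.castSucc = v).card
        = k := by
      rw [countPre v, splitS (fun w => w ∘ Fin.castSucc = v)]
      exact cardPre v
    have e2 : ((Finset.range S.card).filter fun t => Vf (t + 1) = v).card
        + (({a, b} : Finset (Word (m + 1) k)).filter fun w => w ∘ Fin.succ = v).card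
        = k := by
      rw [countSuf v, splitS (fun w => w ∘ Fin.succ = v)]
      exact cardSuf v
    have e3 : ((Finset.range (S.card + 1)).filter fun t => Vf t = v).card
        = ((Finset.range S.card).filter fun t => Vf t = v).card
          + (if Vf S.card = v then 1 else 0) := by
      rw [Finset.range_add_one, Finset.filter_insert]
      split_ifs with h
      · rw [Finset.card_insert_of_notMem (by simp)]
      · omega
    have e4 : ((Finset.range (S.card + 1)).filter fun t => Vf t = v).card
        = ((Finset.range S.card).filter fun t => Vf (t + 1) = v).card
          + (if Vf 0 = v then 1 else 0) := by
      have hsplit : ((Finset.range (S.card + 1)).filter fun t => Vf t = v)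
          = ((Finset.range (S.card + 1)).filter fun t => Vf t = v ∧ t = 0)
            ∪ ((Finset.range (S.card + 1)).filter fun t => Vf t = v ∧ t ≠ 0) := by
        rw [← Finset.filter_or]
        apply Finset.filter_congr
        intro t _
        constructor
        · intro hv
          by_cases h0 : t = 0
          · exact Or.inl ⟨hv, h0⟩
          · exact Or.inr ⟨hv, h0⟩
        · rintro (⟨hv, -⟩ | ⟨hv, -⟩) <;> exact hv
      have hdisj : Disjoint
          ((Finset.range (S.card + 1)).filter fun t => Vf t = v ∧ t = 0)
          ((Finset.range (S.card + 1)).filter fun t => Vf t = v ∧ t ≠ 0) := by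
        rw [Finset.disjoint_left]
        intro x hx hx'
        simp only [Finset.mem_filter] at hx hx'
        exact hx'.2.2 hx.2.2
      have c1 : ((Finset.range (S.card + 1)).filter fun t => Vf t = v ∧ t = 0).card
          = (if Vf 0 = v then 1 else 0) := by
        split_ifs with h
        · rw [show ((Finset.range (S.card + 1)).filter fun t => Vf t = v ∧ t = 0) = {0} by
            ext t
            simp only [Finset.mem_filter, Finset.mem_range, Finset.mem_singleton]
            constructor
            · rintro ⟨-, -, rfl⟩; rfl
            · rintro rfl; exact ⟨by omega, h, rfl⟩]
          exact Finset.card_singleton 0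
        · rw [Finset.filter_eq_empty_iff.mpr ?_]
          · exact Finset.card_empty
          · rintro x - ⟨hv, rfl⟩
            exact h hv
      have c2 : ((Finset.range (S.card + 1)).filter fun t => Vf t = v ∧ t ≠ 0).card
          = ((Finset.range S.card).filter fun t => Vf (t + 1) = v).card := by
        symm
        apply Finset.card_bij (fun t _ => t + 1)
        · intro t ht
          simp only [Finset.mem_filter, Finset.mem_range] at ht ⊢
          exact ⟨by omega, ht.2, by omega⟩
        · intro t _ t' _ h
          omega
        · intro t ht
          simp only [Finset.mem_filter, Finset.mem_range] at ht
          obtain ⟨hlt, hv, h0⟩ := ht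
          refine ⟨t - 1, ?_, by omega⟩
          simp only [Finset.mem_filter, Finset.mem_range]
          refine ⟨by omega, ?_⟩
          rw [show t - 1 + 1 = t by omega]
          exact hv
      rw [hsplit, Finset.card_union_of_disjoint hdisj, c1, c2]
      omega
    omega
  -- facts about a and b
  have fa : ¬(a ∘ Fin.castSucc = a ∘ Fin.succ) := by
    intro h
    apply ha
    refine ⟨a 0, ?_⟩
    funext i
    induction i using Fin.induction with
    | zero => rfl
    | succ i ih =>
      have hci := congrFun h i
      simp only [Function.comp_apply] at hci
      rw [← hci]; exact ih
  have fb : ¬(b ∘ Fin.castSucc = b ∘ Fin.succ) := by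
    intro h
    apply hb
    refine ⟨b 0, ?_⟩
    funext i
    induction i using Fin.induction with
    | zero => rfl
    | succ i ih =>
      have hci := congrFun h i
      simp only [Function.comp_apply] at hci
      rw [← hci]; exact ih
  have fab : ¬(b ∘ Fin.castSucc = a ∘ Fin.succ) := by
    intro h
    apply h1
    intro i hlt
    have hi : i < m := by omega
    have e : (⟨i, by omega⟩ : Fin (m + 1)) = Fin.castSucc ⟨i, hi⟩ := by ext; simp
    have e' : (⟨i + 1, hlt⟩ : Fin (m + 1)) = Fin.succ ⟨i, hi⟩ := by ext; simp
    rw [e, e']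
    exact congrFun h ⟨i, hi⟩
  have fba : ¬(a ∘ Fin.castSucc = b ∘ Fin.succ) := by
    intro h
    apply h2
    intro i hlt
    have hi : i < m := by omega
    have e : (⟨i, by omega⟩ : Fin (m + 1)) = Fin.castSucc ⟨i, hi⟩ := by ext; simp
    have e' : (⟨i + 1, hlt⟩ : Fin (m + 1)) = Fin.succ ⟨i, hi⟩ := by ext; simp
    rw [e, e']
    exact congrFun h ⟨i, hi⟩
  -- apply the balance equation at v = suffix a and v = suffix b
  have ma := main (a ∘ Fin.succ)
  have mb := main (b ∘ Fin.succ)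
  by_cases hba : b ∘ Fin.succ = a ∘ Fin.succ
  · simp only [Finset.filter_insert, Finset.filter_singleton, if_neg fa, if_neg fab, if_pos hba,
      eq_self_iff_true, if_true, Finset.card_empty] at ma
    rw [Finset.card_insert_of_notMem (by simp [hne]), Finset.card_singleton] at ma
    split_ifs at ma <;> omega
  · have hab : ¬(a ∘ Fin.succ = b ∘ Fin.succ) := fun h => hba h.symm
    simp only [Finset.filter_insert, Finset.filter_singleton, if_neg fa, if_neg fab, if_neg hba,
      eq_self_iff_true, if_true, Finset.card_empty] at ma
    rw [Finset.card_insert_of_notMem (Finset.notMem_empty a), Finset.card_empty] at ma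
    simp only [Finset.filter_insert, Finset.filter_singleton, if_neg fb, if_neg fba, if_neg hab,
      eq_self_iff_true, if_true, Finset.card_singleton, Finset.card_empty] at mb
    have h0a : Vf 0 = a ∘ Fin.succ := by
      by_contra hc
      rw [if_neg hc] at ma
      split_ifs at ma <;> omega
    have h0b : Vf 0 = b ∘ Fin.succ := by
      by_contra hc
      rw [if_neg hc] at mb
      split_ifs at mb <;> omega
    exact hba (h0b.symm.trans h0a)
end
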